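/- arXiv:1707.06771 — 2 statements merged into one kernel-verified Lean document; each statement's English description precedes it below -/
import Mathlib

section
/- For every positive integer n, real x > -1, and complex z with |z| < 1 + x, we have B(n, 1+x-z)/B(n, 1+x) = exp( Σ_{k=1}^∞ (z^k/k) · H_n^{(k)}(x) ), where H_n^{(k)}(x) = Σ_{j=1}^n 1/(j+x)^k. -/
/-- The Euler beta function `B(a,b) = Γ(a)Γ(b)/Γ(a+b)` (complex arguments). -/
noncomputable def eulerBeta (a b : ℂ) : ℂ :=
  Complex.Gamma a * Complex.Gamma b / Complex.Gamma (a + b)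

/-- Generalized harmonic number `H_n^{(k)}(x) = ∑_{j=1}^n 1/(j+x)^k`. -/
noncomputable def genHarmonic (n k : ℕ) (x : ℝ) : ℂ :=
  ∑ j ∈ Finset.Icc 1 n, 1 / ((j : ℂ) + x) ^ k

/-!
By `Γ(s + n) = Γ(s) · s(s+1)⋯(s+n-1)`, the ratio `B(n, 1+x-z) / B(n, 1+x)` is the finite
product `∏_{j=1}^n (j+x)/(j+x-z)`. Each factor is `exp (-log (1 - z/(j+x)))`, and summing the
Taylor series of `-log (1 - w)` over `j` gives exactly `∑_k z^k/k · H_n^{(k)}(x)`.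
-/

open Complex Finset

lemma ascPochhammer_eval_eq_prod_range {R : Type*} [CommSemiring R] (n : ℕ) (r : R) :
    (ascPochhammer R n).eval r = ∏ j ∈ range n, (r + j) := by
  induction n with
  | zero => simp
  | succ n ih => simp [ascPochhammer_succ_right, ih, ← prod_range_succ]

lemma Complex.ne_neg_natCast_of_re_pos {s : ℂ} (hs : 0 < s.re) (k : ℕ) : s ≠ -k := by
  rintro rfl
  simp only [neg_re, natCast_re, Left.neg_pos_iff] at hs
  exact (Nat.cast_nonneg k).not_gt hs

lemma eulerBeta_natCast_left (n : ℕ) {a : ℂ} (ha : ∀ k : ℕ, a ≠ -k) :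
    eulerBeta n a = Gamma n / ∏ j ∈ range n, (a + j) := by
  rw [eulerBeta, add_comm, ← ascPochhammer_eval_eq_prod_range,
    ← Gamma_add_nat_div_Gamma_eq a ha, div_div_eq_mul_div, mul_div_assoc]

lemma eulerBeta_natCast_left_div {n : ℕ} (hn : n ≠ 0) {a b : ℂ} (ha : ∀ k : ℕ, a ≠ -k)
    (hb : ∀ k : ℕ, b ≠ -k) :
    eulerBeta n a / eulerBeta n b = ∏ j ∈ range n, (b + j) / (a + j) := by
  have hGn : Gamma n ≠ 0 := Gamma_ne_zero_of_re_pos (by simpa using Nat.pos_of_ne_zero hn)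
  rw [eulerBeta_natCast_left n ha, eulerBeta_natCast_left n hb, prod_div_distrib,
    div_div_div_cancel_left' _ _ hGn]

lemma exp_neg_log_one_sub_div {z w : ℂ} (h : ‖z‖ < ‖w‖) :
    exp (-log (1 - z / w)) = w / (w - z) := by
  have hw : w ≠ 0 := norm_pos_iff.mp ((norm_nonneg z).trans_lt h)
  have hwz : w - z ≠ 0 := fun h' => by simp [sub_eq_zero.mp h'] at h
  rw [exp_neg, exp_log, one_sub_div hw, inv_div]
  rwa [one_sub_div hw, div_ne_zero_iff, and_iff_left hw]

lemma hasSum_pow_div_mul_sum_inv_pow {ι : Type*} (s : Finset ι) (w : ι → ℂ) {z : ℂ}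
    (hz : ∀ i ∈ s, ‖z‖ < ‖w i‖) :
    HasSum (fun k : ℕ => z ^ (k + 1) / (k + 1) * ∑ i ∈ s, 1 / w i ^ (k + 1))
      (∑ i ∈ s, -log (1 - z / w i)) := by
  have hterm (k : ℕ) : z ^ (k + 1) / (k + 1) * ∑ i ∈ s, 1 / w i ^ (k + 1) =
      ∑ i ∈ s, (z / w i) ^ (k + 1) / (k + 1) := by
    rw [mul_sum]
    exact sum_congr rfl fun i _ => by ring
  simp only [hterm]
  refine hasSum_sum fun i hi => hasSum_taylorSeries_neg_log' ?_
  rw [norm_div, div_lt_one ((norm_nonneg z).trans_lt (hz i hi))]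
  exact hz i hi

lemma exp_tsum_pow_div_mul_sum_inv_pow {ι : Type*} (s : Finset ι) (w : ι → ℂ) {z : ℂ}
    (hz : ∀ i ∈ s, ‖z‖ < ‖w i‖) :
    exp (∑' k : ℕ, z ^ (k + 1) / (k + 1) * ∑ i ∈ s, 1 / w i ^ (k + 1)) =
      ∏ i ∈ s, w i / (w i - z) := by
  rw [(hasSum_pow_div_mul_sum_inv_pow s w hz).tsum_eq, exp_sum]
  exact prod_congr rfl fun i hi => exp_neg_log_one_sub_div (hz i hi)

theorem beta_ratio_eq_exp_general (n : ℕ) (hn : 0 < n) (x : ℝ)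
    (z : ℂ) (hz : ‖z‖ < 1 + x) :
    eulerBeta (n : ℂ) (1 + x - z) / eulerBeta (n : ℂ) (1 + x) =
      Complex.exp (∑' k : ℕ, z ^ (k + 1) / (k + 1) * genHarmonic n (k + 1) x) := by
  have hz_lt (j : ℕ) (hj : j ∈ Icc 1 n) : ‖z‖ < ‖(j : ℂ) + x‖ := by
    have hj1 : (1 : ℝ) ≤ j := by exact_mod_cast (mem_Icc.mp hj).1
    rw [← ofReal_natCast, ← ofReal_add, norm_real,
      Real.norm_of_nonneg (by linarith [norm_nonneg z])]
    linarith
  have ha : 0 < (1 + x - z : ℂ).re := by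
    simp only [sub_re, add_re, one_re, ofReal_re]
    linarith [re_le_norm z]
  have hb : 0 < (1 + x : ℂ).re := by
    simp only [add_re, one_re, ofReal_re]
    linarith [norm_nonneg z]
  unfold genHarmonic
  rw [eulerBeta_natCast_left_div hn.ne' (ne_neg_natCast_of_re_pos ha)
      (ne_neg_natCast_of_re_pos hb), exp_tsum_pow_div_mul_sum_inv_pow _ _ hz_lt,
    ← Ico_add_one_right_eq_Icc, prod_Ico_eq_prod_range]
  refine prod_congr (by simp) fun j _ => ?_
  push_cast
  ring_nf

theorem beta_ratio_eq_exp (n : ℕ) (hn : 0 < n) (x : ℝ) (hx : -1 < x)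
    (z : ℂ) (hz : ‖z‖ < 1 + x) :
    eulerBeta (n : ℂ) (1 + x - z) / eulerBeta (n : ℂ) (1 + x) =
      Complex.exp (∑' k : ℕ, z ^ (k + 1) / (k + 1) * genHarmonic n (k + 1) x) :=
  beta_ratio_eq_exp_general n hn x z hz
end

section
/- For a complex number s with Re(s) > 0, a positive integer n, and a real x > -1, one has (1/Γ(s)) ∫_0^∞ ((1-e^{-t})^n / (e^t - 1)) e^{-xt} t^{s-1} dt = Σ_{k=0}^{n-1} (-1)^k C(n-1,k) (x+k+1)^{-s}. -/
/-!
Since `(1 - e^{-t})^n / (e^t - 1) = (1 - e^{-t})^{n-1} e^{-t}`, the binomial theorem turns the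
integrand into the finite combination `∑ (-1)^k C(n-1,k) t^{s-1} e^{-(x+k+1)t}`, and each term
integrates to `Γ(s) (x+k+1)^{-s}` because `x + k + 1 > 0`.
-/

open MeasureTheory Set Complex

lemma one_sub_pow_mul_eq_sum {R : Type*} [CommRing R] (w : R) (m : ℕ) :
    (1 - w) ^ m * w =
      ∑ k ∈ Finset.range (m + 1), (-1) ^ k * (m.choose k : R) * w ^ (k + 1) := by
  rw [sub_eq_add_neg, add_comm, add_pow, Finset.sum_mul]
  refine Finset.sum_congr rfl fun k _ => ?_
  rw [neg_pow]
  ring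

lemma one_sub_exp_neg_pow_succ_div_exp_sub_one {z : ℂ} (hz : exp z ≠ 1) (m : ℕ) :
    (1 - exp (-z)) ^ (m + 1) / (exp z - 1) = (1 - exp (-z)) ^ m * exp (-z) := by
  have hfac : exp z - 1 = exp z * (1 - exp (-z)) := by
    rw [mul_sub, mul_one, ← exp_add, add_neg_cancel, exp_zero]
  have hne : 1 - exp (-z) ≠ 0 := right_ne_zero_of_mul (hfac ▸ sub_ne_zero.mpr hz)
  rw [hfac, pow_succ, exp_neg]
  field_simp

lemma integrand_eq_sum (s : ℂ) (x : ℝ) (m : ℕ) {t : ℝ} (ht : 0 < t) :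
    ((1 - exp (-(t : ℂ))) ^ (m + 1) / (exp (t : ℂ) - 1)) * exp (-(x : ℂ) * t) *
        (t : ℂ) ^ (s - 1) =
      ∑ k ∈ Finset.range (m + 1), (-1) ^ k * (m.choose k : ℂ) *
        ((t : ℂ) ^ (s - 1) * exp (-((x + k + 1 : ℝ) * t))) := by
  have hexp : exp (t : ℂ) ≠ 1 := by
    rw [← ofReal_exp, ← ofReal_one, Ne, ofReal_inj, Real.exp_eq_one_iff]
    exact ht.ne'
  rw [one_sub_exp_neg_pow_succ_div_exp_sub_one hexp, one_sub_pow_mul_eq_sum, Finset.sum_mul,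
    Finset.sum_mul]
  refine Finset.sum_congr rfl fun k _ => ?_
  have hexp_split :
      exp (-((x + k + 1 : ℝ) * t)) = exp (-(t : ℂ)) ^ (k + 1) * exp (-(x : ℂ) * t) := by
    rw [← exp_nat_mul, ← exp_add]
    push_cast
    ring_nf
  rw [hexp_split]
  ring

lemma integral_cpow_mul_exp_neg_mul_Ioi_div_Gamma {s : ℂ} (hs : 0 < s.re) {r : ℝ} (hr : 0 < r) :
    1 / Gamma s * ∫ t in Ioi (0 : ℝ), (t : ℂ) ^ (s - 1) * exp (-(r * t)) = (r : ℂ) ^ (-s) := by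
  rw [integral_cpow_mul_exp_neg_mul_Ioi hs hr, one_div (r : ℂ),
    inv_cpow _ _ (by rw [arg_ofReal_of_nonneg hr.le]; exact Real.pi_ne_zero.symm), ← cpow_neg]
  field_simp [Gamma_ne_zero_of_re_pos hs]

lemma integrableOn_cpow_mul_exp_neg_mul_Ioi {s : ℂ} (hs : 0 < s.re) {r : ℝ} (hr : 0 < r) :
    IntegrableOn (fun t : ℝ => (t : ℂ) ^ (s - 1) * exp (-(r * t))) (Ioi 0) := by
  refine .of_integral_ne_zero fun h => ?_
  have := integral_cpow_mul_exp_neg_mul_Ioi_div_Gamma hs hr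
  rw [h, mul_zero, eq_comm, cpow_eq_zero_iff] at this
  exact ofReal_ne_zero.mpr hr.ne' this.1

theorem D_transform_eq_sum (s : ℂ) (hs : 0 < s.re) (n : ℕ) (hn : 0 < n)
    (x : ℝ) (hx : -1 < x) :
    (1 / Complex.Gamma s) *
        ∫ t in Set.Ioi (0 : ℝ),
          ((1 - Complex.exp (-(t : ℂ))) ^ n / (Complex.exp (t : ℂ) - 1)) *
            Complex.exp (-(x : ℂ) * t) * (t : ℂ) ^ (s - 1) =
      ∑ k ∈ Finset.range n, (-1) ^ k * (Nat.choose (n - 1) k : ℂ) *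
        ((x : ℂ) + k + 1) ^ (-s) := by
  obtain ⟨m, rfl⟩ := Nat.exists_eq_add_of_lt hn
  have hr (k : ℕ) : 0 < x + k + 1 := by linarith [k.cast_nonneg (α := ℝ)]
  rw [zero_add, Nat.add_sub_cancel, setIntegral_congr_fun measurableSet_Ioi
      fun t ht => integrand_eq_sum s x m ht,
    integral_finsetSum _ fun k _ => (integrableOn_cpow_mul_exp_neg_mul_Ioi hs (hr k)).const_mul _,
    Finset.mul_sum]
  refine Finset.sum_congr rfl fun k _ => ?_
  rw [integral_const_mul, mul_left_comm, integral_cpow_mul_exp_neg_mul_Ioi_div_Gamma hs (hr k)]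
  push_cast
  rfl
end
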